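/- Let M be an MDP with target sets F_1,…,F_k, F = ∪_i F_i, every state of F absorbing, α an initial distribution on V∖F, and let σ be a memoryless strategy such that Pr^σ_v(◇F) > 0 for every state v. Then the expected-visits vector y' defined by y'_{(v,γ)} = Σ_{v'∈V∖F} α(v') Σ_{n=0}^∞ (P^σ)^n_{v',v} σ(v)(γ) for v ∈ V∖F, γ ∈ Γ_v, and y'_v = Σ_{v'∈V∖F} Σ_{γ'∈Γ_{v'}} p_{(v',γ',v)} y'_{(v',γ')} for v ∈ F, is well defined (all entries are finite), and y' is a feasible solution of the multi-objective LP associated with (M, α, F_1,…,F_k). -/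

import Mathlib

open scoped BigOperators
open MeasureTheory

/-- A finite-state Markov decision process: a finite set of states `V`, a finite
action alphabet `A`, a nonempty set of enabled actions at each state, and for each
state and enabled action a probability distribution on next states. -/
structure MDP (V A : Type) [Fintype V] [Fintype A] where
  enabled : V → Finset A
  enabled_nonempty : ∀ v, (enabled v).Nonempty
  p : V → A → V → ℝ
  p_nonneg : ∀ v a v', 0 ≤ p v a v'
  p_sum : ∀ v, ∀ a ∈ enabled v, ∑ v', p v a v' = 1

namespace MDP

variable {V A : Type} [Fintype V] [Fintype A]

/-- A (history-dependent, randomized) strategy: given the list of past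
(state, action) pairs (most recent first) and the current state, a probability
distribution on actions, supported on the enabled actions. -/
structure Strategy (M : MDP V A) where
  act : List (V × A) → V → A → ℝ
  act_nonneg : ∀ h v a, 0 ≤ act h v a
  act_support : ∀ h v a, a ∉ M.enabled v → act h v a = 0
  act_sum : ∀ h v, ∑ a, act h v a = 1

/-- A strategy is memoryless (stationary) if it depends only on the current state. -/
def Strategy.Memoryless {M : MDP V A} (σ : M.Strategy) : Prop :=
  ∀ h h' v, σ.act h v = σ.act h' v

/-- A strategy is pure (deterministic) if it always plays a single action with
probability 1. -/
def Strategy.Pure {M : MDP V A} (σ : M.Strategy) : Prop :=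
  ∀ h v, ∃ a, σ.act h v a = 1

/-- `α` is a probability distribution on `V`. -/
def IsDist (α : V → ℝ) : Prop :=
  (∀ v, 0 ≤ α v) ∧ ∑ v, α v = 1

/-- The point (Dirac) distribution at `u`. -/
def diracD [DecidableEq V] (u : V) : V → ℝ := fun v => if v = u then 1 else 0

/-- The `m`-th binary digit of `x`. -/
noncomputable def bit (m : ℕ) (x : ℝ) : ℝ :=
  if ⌊x * 2 ^ (m + 1)⌋ % 2 = 1 then 1 else 0

/-- Extracts from a single seed `x ∈ [0,1]` a sequence of independent uniform
`[0,1]` samples, by splitting the binary digits of `x`. -/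
noncomputable def unif (k : ℕ) (x : ℝ) : ℝ :=
  ∑' n : ℕ, bit (Nat.pair k n) x / 2 ^ (n + 1)

/-- Inverse-CDF sampling from a distribution `q` on a finite type, using the
uniform sample `u`. -/
noncomputable def sample {S : Type} [Fintype S] [Nonempty S] (q : S → ℝ) (u : ℝ) : S :=
  let e := Fintype.equivFin S
  if h : (Finset.univ.filter fun i => u < ∑ j ∈ Finset.Iic i, q (e.symm j)).Nonempty then
    e.symm ((Finset.univ.filter fun i => u < ∑ j ∈ Finset.Iic i, q (e.symm j)).min' h)
  else Classical.arbitrary S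

variable [Nonempty V] [Nonempty A]

/-- The random run of `M` under strategy `σ` from initial distribution `α`, driven by
the random seed `x`: at time `n` it returns the list of past (state, action) pairs
(most recent first) together with the current state and the action chosen there. -/
noncomputable def run (M : MDP V A) (σ : M.Strategy) (α : V → ℝ) (x : ℝ) :
    ℕ → List (V × A) × (V × A)
  | 0 =>
      let s := sample α (unif 0 x)
      ([], (s, sample (σ.act [] s) (unif 1 x)))
  | n + 1 =>
      let r := run M σ α x n
      let s' := sample (M.p r.2.1 r.2.2) (unif (2 * n + 2) x)
      (r.2 :: r.1, (s', sample (σ.act (r.2 :: r.1) s') (unif (2 * n + 3) x)))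

/-- The state at time `n` of the run driven by seed `x`. -/
noncomputable def stateAt (M : MDP V A) (σ : M.Strategy) (α : V → ℝ) (x : ℝ) (n : ℕ) : V :=
  (M.run σ α x n).2.1

/-- The probability, under strategy `σ` from initial distribution `α`, that the
infinite trajectory of states belongs to the event `E`. -/
noncomputable def PrEvent (M : MDP V A) (σ : M.Strategy) (α : V → ℝ) (E : Set (ℕ → V)) : ℝ :=
  (volume {x : ℝ | x ∈ Set.Icc (0 : ℝ) 1 ∧ M.stateAt σ α x ∈ E}).toReal

/-- The probability of eventually visiting the set `F` (the event `◇F`). -/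
noncomputable def PrReach (M : MDP V A) (σ : M.Strategy) (α : V → ℝ) (F : Set V) : ℝ :=
  M.PrEvent σ α {w | ∃ n, w n ∈ F}

/-- A state is absorbing if it has a single enabled action, which loops on it with
probability 1. -/
def Absorbing (M : MDP V A) (v : V) : Prop :=
  ∃ a, M.enabled v = {a} ∧ M.p v a v = 1

/-- One positive-probability step of the underlying graph of the MDP. -/
def Step (M : MDP V A) (v v' : V) : Prop :=
  ∃ a ∈ M.enabled v, 0 < M.p v a v'

/-- The MDP is cleaned-up w.r.t. `F`: from every state there is a path of
positive-probability transitions reaching `F`. -/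
def CleanedUp (M : MDP V A) (F : Set V) : Prop :=
  ∀ v, ∃ w ∈ F, Relation.ReflTransGen M.Step v w

end MDP

namespace MDP

variable {V A : Type} [Fintype V] [Fintype A]

/-- Feasibility for the multi-objective LP associated with `(M, α, F)`:
`y` are the variables `y_{(v,γ)}` (for `v ∉ F`), `yF` the variables `y_v` (for `v ∈ F`). -/
def LPFeasible [DecidableEq V] (M : MDP V A) (α : V → ℝ) (F : Finset V)
    (y : V → A → ℝ) (yF : V → ℝ) : Prop :=
  (∀ v ∉ F, (∑ a ∈ M.enabled v, y v a) -
      (∑ v' ∈ Fᶜ, ∑ a' ∈ M.enabled v', M.p v' a' v * y v' a') = α v) ∧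
  (∀ v ∈ F, yF v - (∑ v' ∈ Fᶜ, ∑ a' ∈ M.enabled v', M.p v' a' v * y v' a') = 0) ∧
  (∀ v ∈ F, 0 ≤ yF v) ∧
  (∀ v ∉ F, ∀ a ∈ M.enabled v, 0 ≤ y v a)

/-- The substochastic matrix `P^σ` on `V ∖ F` induced by a memoryless strategy `σ`. -/
noncomputable def Pmat [DecidableEq V] (M : MDP V A) (σ : M.Strategy) (F : Finset V) :
    Matrix {v : V // v ∉ F} {v : V // v ∉ F} ℝ :=
  Matrix.of fun v v' => ∑ a ∈ M.enabled v.1, σ.act [] v.1 a * M.p v.1 a v'.1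

end MDP

namespace MDP

variable {V A : Type} [Fintype V] [Fintype A]

/-- The expected-visits vector: `y'_{(v,γ)} = ∑_{v' ∈ V∖F} α(v') ∑_{n=0}^∞
(P^σ)^n_{v',v} · σ(v)(γ)`, the expected number of visits to `v ∉ F` at which
action `γ` is chosen, under the memoryless strategy `σ` started from `α`. -/
noncomputable def yvisit [DecidableEq V] (M : MDP V A) (σ : M.Strategy) (F : Finset V)
    (α : V → ℝ) (v : V) (a : A) : ℝ :=
  if h : v ∈ F then 0
  else ∑ v' : {w : V // w ∉ F},
    α v'.1 * ∑' n : ℕ, (M.Pmat σ F ^ n) v' ⟨v, h⟩ * σ.act [] v a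

/-- The induced values `y'_v = ∑_{v' ∈ V∖F} ∑_{γ'} p_{(v',γ',v)} y'_{(v',γ')}`
for `v ∈ F`. -/
noncomputable def yvisitF [DecidableEq V] (M : MDP V A) (σ : M.Strategy) (F : Finset V)
    (α : V → ℝ) (v : V) : ℝ :=
  ∑ v' ∈ Fᶜ, ∑ a' ∈ M.enabled v', M.p v' a' v * M.yvisit σ F α v' a'

end MDP

open MeasureTheory
open scoped Matrix

/-!
If `Pr^σ_v(◇F) > 0`, some path of `σ`-steps of positive probability leads from `v` into `F`:
the simulated run only takes such steps unless one of its uniform samples equals `1`, and each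
of these events is null because it prescribes infinitely many binary digits of the seed.
Along such a path mass leaks out of `V ∖ F`, so for some `N` all row sums of `(P^σ)^N` are at most
some `c < 1`, and the entries of `(P^σ)^n` are at most `c ^ (n / N)`. Hence the Neumann series
`∑ₙ (P^σ)ⁿ` converges; it inverts `1 - P^σ`, which is exactly the flow constraint of the LP.
-/

def dyadicInterval (L : ℕ) (a : ℤ) : Set ℝ := Set.Ico (a / 2 ^ L) ((a + 1) / 2 ^ L)

lemma mem_dyadicInterval {L : ℕ} {a : ℤ} {x : ℝ} :
    x ∈ dyadicInterval L a ↔ ⌊x * 2 ^ L⌋ = a := by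
  have h2 : (0 : ℝ) < 2 ^ L := by positivity
  rw [dyadicInterval, Set.mem_Ico, div_le_iff₀ h2, lt_div_iff₀ h2, Int.floor_eq_iff]

lemma volume_dyadicInterval (L : ℕ) (a : ℤ) : volume (dyadicInterval L a) = 2⁻¹ ^ L := by
  rw [dyadicInterval, Real.volume_Ico, ← sub_div, add_sub_cancel_left, one_div, ← inv_pow,
    ENNReal.ofReal_pow (by norm_num), ENNReal.ofReal_inv_of_pos two_pos, ENNReal.ofReal_ofNat]

lemma dyadicInterval_eq_union (L : ℕ) (a : ℤ) :
    dyadicInterval L a = dyadicInterval (L + 1) (2 * a) ∪ dyadicInterval (L + 1) (2 * a + 1) := by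
  simp only [dyadicInterval, Int.cast_add, Int.cast_mul, Int.cast_ofNat, Int.cast_one, pow_succ]
  rw [Set.Ico_union_Ico_eq_Ico]
  · congr 1 <;> field_simp; ring
  all_goals gcongr; linarith

lemma pos_of_lt_sum_Iic_of_forall_lt {ι : Type*} [LinearOrder ι] [LocallyFiniteOrderBot ι]
    {q : ι → ℝ} (hq : ∀ i, 0 ≤ q i) {u : ℝ} (hu : 0 ≤ u) {i : ι}
    (hi : u < ∑ j ∈ Finset.Iic i, q j) (hmin : ∀ j < i, ∑ l ∈ Finset.Iic j, q l ≤ u) :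
    0 < q i := by
  refine (hq i).lt_of_ne fun hqi => hi.not_ge ?_
  rw [← Finset.Iio_insert, Finset.sum_insert Finset.notMem_Iio_self, ← hqi, zero_add]
  rcases (Finset.Iio i).eq_empty_or_nonempty with hempty | hne
  · rw [hempty, Finset.sum_empty]; exact hu
  · have hmax := Finset.mem_Iio.1 ((Finset.Iio i).max'_mem hne)
    refine le_trans (Finset.sum_le_sum_of_subset_of_nonneg (fun l hl => ?_)
      fun l _ _ => hq l) (hmin _ hmax)
    exact Finset.mem_Iic.2 ((Finset.Iio i).le_max' l hl)

lemma summable_pow_div {c : ℝ} (hc0 : 0 ≤ c) (hc1 : c < 1) (N : ℕ) [NeZero N] :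
    Summable fun n : ℕ => c ^ (n / N) := by
  have h : Summable fun x : ℕ × Fin N => c ^ x.1 := by
    simpa using (summable_geometric_of_lt_one hc0 hc1).mul_of_nonneg
      (.of_finite (f := fun _ : Fin N => (1 : ℝ))) (fun _ => pow_nonneg hc0 _)
      fun _ => zero_le_one
  exact (Nat.divModEquiv N).summable_iff.2 h

namespace Matrix

lemma tsum_apply {X m n R : Type*} [AddCommMonoid R] [TopologicalSpace R] [T2Space R]
    {f : X → Matrix m n R} (hf : Summable f) (i : m) (j : n) :
    (∑' x, f x) i j = ∑' x, f x i j :=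
  (congr_fun (_root_.tsum_apply hf) j).trans (_root_.tsum_apply (Pi.summable.1 hf i))

variable {ι : Type*} [Fintype ι] {Q : Matrix ι ι ℝ}

lemma mulVec_mono_of_nonneg (hQ : ∀ i j, 0 ≤ Q i j) {v w : ι → ℝ} (h : v ≤ w) :
    Q *ᵥ v ≤ Q *ᵥ w := fun i =>
  Finset.sum_le_sum fun j _ => mul_le_mul_of_nonneg_left (h j) (hQ i j)

lemma apply_le_mulVec_one (hQ : ∀ i j, 0 ≤ Q i j) (i j : ι) : Q i j ≤ (Q *ᵥ 1) i := by
  simpa [mulVec, dotProduct] using Finset.single_le_sum (fun k _ => hQ i k) (Finset.mem_univ j)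

variable [DecidableEq ι]

lemma antitone_pow_mulVec_one (hQ : ∀ i j, 0 ≤ Q i j) (hrow : Q *ᵥ 1 ≤ 1) :
    Antitone fun n => Q ^ n *ᵥ 1 := by
  refine antitone_nat_of_succ_le fun n => ?_
  rw [pow_succ, ← mulVec_mulVec]
  exact mulVec_mono_of_nonneg (pow_apply_nonneg hQ n) hrow

lemma pow_mulVec_one_le_one (hQ : ∀ i j, 0 ≤ Q i j) (hrow : Q *ᵥ 1 ≤ 1) (n : ℕ) :
    Q ^ n *ᵥ 1 ≤ 1 := by
  simpa using antitone_pow_mulVec_one hQ hrow (Nat.zero_le n)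

lemma pow_succ_mulVec_one_lt (hQ : ∀ i j, 0 ≤ Q i j) (hrow : Q *ᵥ 1 ≤ 1) {i j : ι}
    (hij : 0 < Q i j) {n : ℕ} (hj : (Q ^ n *ᵥ 1) j < 1) :
    (Q ^ (n + 1) *ᵥ 1) i < 1 := by
  rw [pow_succ', ← mulVec_mulVec]
  calc (Q *ᵥ (Q ^ n *ᵥ 1)) i < (Q *ᵥ 1) i :=
        Finset.sum_lt_sum (fun k _ => mul_le_mul_of_nonneg_left
          (pow_mulVec_one_le_one hQ hrow n k) (hQ i k))
          ⟨j, Finset.mem_univ j, mul_lt_mul_of_pos_left hj hij⟩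
    _ ≤ 1 := hrow i

lemma pow_mul_mulVec_one_le (hQ : ∀ i j, 0 ≤ Q i j) {N : ℕ} {c : ℝ} (hc : 0 ≤ c)
    (hN : Q ^ N *ᵥ 1 ≤ c • 1) (t : ℕ) :
    Q ^ (N * t) *ᵥ 1 ≤ c ^ t • 1 := by
  induction t with
  | zero => simp
  | succ t ih =>
    calc Q ^ (N * (t + 1)) *ᵥ 1 = Q ^ N *ᵥ (Q ^ (N * t) *ᵥ 1) := by
          rw [mulVec_mulVec, ← pow_add, mul_add_one, add_comm]
      _ ≤ Q ^ N *ᵥ (c ^ t • 1) := mulVec_mono_of_nonneg (pow_apply_nonneg hQ N) ih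
      _ = c ^ t • (Q ^ N *ᵥ 1) := mulVec_smul _ _ _
      _ ≤ c ^ t • c • 1 := smul_le_smul_of_nonneg_left hN (pow_nonneg hc t)
      _ = c ^ (t + 1) • 1 := by rw [smul_smul, pow_succ]

lemma summable_pow_apply (hQ : ∀ i j, 0 ≤ Q i j) (hrow : Q *ᵥ 1 ≤ 1)
    (hleak : ∀ i, ∃ n, (Q ^ n *ᵥ 1) i < 1) (i j : ι) :
    Summable fun n => (Q ^ n) i j := by
  have hev : ∀ i, ∀ᶠ n in Filter.atTop, (Q ^ n *ᵥ 1) i < 1 := fun i => by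
    obtain ⟨n, hn⟩ := hleak i
    exact Filter.eventually_atTop.2
      ⟨n, fun m hm => (antitone_pow_mulVec_one hQ hrow hm i).trans_lt hn⟩
  obtain ⟨N, hN⟩ := ((Filter.eventually_all.2 hev).and (Filter.eventually_gt_atTop 0)).exists
  have : NeZero N := ⟨hN.2.ne'⟩
  have : Nonempty ι := ⟨i⟩
  obtain ⟨i₀, hi₀⟩ := Finite.exists_max fun k => (Q ^ N *ᵥ 1) k
  set c := (Q ^ N *ᵥ 1) i₀
  have hc0 : 0 ≤ c := Finset.sum_nonneg fun k _ => by
    simpa using pow_apply_nonneg hQ N i₀ k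
  have hbound (n : ℕ) : (Q ^ n) i j ≤ c ^ (n / N) :=
    calc (Q ^ n) i j ≤ (Q ^ n *ᵥ 1) i := apply_le_mulVec_one (pow_apply_nonneg hQ n) i j
      _ ≤ (Q ^ (N * (n / N)) *ᵥ 1) i := antitone_pow_mulVec_one hQ hrow (Nat.mul_div_le n N) i
      _ ≤ c ^ (n / N) := by
        simpa using pow_mul_mulVec_one_le hQ hc0 (fun k => by simpa using hi₀ k) (n / N) i
  exact (summable_pow_div hc0 (hN.1 i₀) N).of_nonneg_of_le (fun n => pow_apply_nonneg hQ n i j)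
    hbound

end Matrix

namespace MDP

lemma bit_of_mem_dyadicInterval {m : ℕ} {b : ℤ} {x : ℝ}
    (hx : x ∈ dyadicInterval (m + 1) b) :
    bit m x = if b % 2 = 1 then 1 else 0 := by
  rw [bit, mem_dyadicInterval.1 hx]

lemma volume_dyadicInterval_inter_bits_le (N : ℕ) :
    ∀ (m : ℕ → ℕ), StrictMono m → ∀ (L : ℕ) (a : ℤ), L ≤ m 0 →
      volume (dyadicInterval L a ∩ {x | ∀ n < N, bit (m n) x = 1}) ≤ 2⁻¹ ^ (L + N) := by
  induction N with
  | zero =>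
    intro m _ L a _
    exact (measure_mono Set.inter_subset_left).trans (volume_dyadicInterval L a).le
  | succ N ihN =>
    intro m hm L a hL
    -- Halve the interval until `L = m 0`; then digit `m 0` being `1` selects its upper half.
    obtain ⟨d, hd⟩ := Nat.exists_eq_add_of_le hL
    induction d generalizing L a with
    | zero =>
      have hsub : dyadicInterval L a ∩ {x | ∀ n < N + 1, bit (m n) x = 1} ⊆
          dyadicInterval (L + 1) (2 * a + 1) ∩ {x | ∀ n < N, bit (m (n + 1)) x = 1} := by
        rintro x ⟨hx, hbits⟩
        refine ⟨?_, fun n hn => hbits (n + 1) (by omega)⟩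
        rw [dyadicInterval_eq_union] at hx
        refine hx.resolve_left fun hx0 => ?_
        have h := hbits 0 (by omega)
        rw [hd, add_zero, bit_of_mem_dyadicInterval hx0] at h
        simp at h
      have hL1 : L + 1 ≤ m 1 := by have := hm Nat.zero_lt_one; omega
      calc _ ≤ _ := measure_mono hsub
        _ ≤ 2⁻¹ ^ (L + 1 + N) := ihN (fun n => m (n + 1)) (fun _ _ h => hm (by omega)) _ _ hL1
        _ = 2⁻¹ ^ (L + (N + 1)) := by ring_nf
    | succ d ihd =>
      rw [dyadicInterval_eq_union, Set.union_inter_distrib_right]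
      calc _ ≤ _ := measure_union_le _ _
        _ ≤ 2⁻¹ ^ (L + 1 + (N + 1)) + 2⁻¹ ^ (L + 1 + (N + 1)) :=
          add_le_add (ihd _ _ (by omega) (by omega)) (ihd _ _ (by omega) (by omega))
        _ = 2⁻¹ ^ (L + (N + 1)) := by
          rw [← two_mul, add_right_comm, pow_succ, mul_comm, mul_assoc,
            ENNReal.inv_mul_cancel two_ne_zero ENNReal.ofNat_ne_top, mul_one]

lemma volume_setOf_forall_bit_eq_one {m : ℕ → ℕ} (hm : StrictMono m) :
    volume {x | ∀ n, bit (m n) x = 1} = 0 := by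
  have hcover : {x | ∀ n, bit (m n) x = 1} ⊆
      ⋃ a : ℤ, dyadicInterval 0 a ∩ {x | ∀ n, bit (m n) x = 1} :=
    fun x hx => Set.mem_iUnion.2 ⟨_, mem_dyadicInterval.2 rfl, hx⟩
  refine measure_mono_null hcover (measure_iUnion_null fun a => ?_)
  refine le_antisymm (ENNReal.le_of_forall_pos_le_add fun ε hε _ => ?_) bot_le
  obtain ⟨N, hN⟩ := ENNReal.exists_inv_two_pow_lt (ENNReal.coe_ne_zero.2 hε.ne')
  have hsub : {x : ℝ | ∀ n, bit (m n) x = 1} ⊆ {x | ∀ n < N, bit (m n) x = 1} :=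
    fun _ hx n _ => hx n
  calc _ ≤ volume (dyadicInterval 0 a ∩ {x | ∀ n < N, bit (m n) x = 1}) :=
        measure_mono (Set.inter_subset_inter_right _ hsub)
    _ ≤ 2⁻¹ ^ (0 + N) := volume_dyadicInterval_inter_bits_le N m hm 0 a (Nat.zero_le _)
    _ ≤ 0 + ε := by rw [zero_add, zero_add]; exact hN.le

lemma bit_nonneg (m : ℕ) (x : ℝ) : 0 ≤ bit m x := by
  unfold bit; split_ifs <;> norm_num

lemma bit_le_one (m : ℕ) (x : ℝ) : bit m x ≤ 1 := by
  unfold bit; split_ifs <;> norm_num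

lemma bit_eq_one_of_ne_zero {m : ℕ} {x : ℝ} (h : bit m x ≠ 0) : bit m x = 1 := by
  unfold bit at *; split_ifs at * <;> simp_all

lemma unif_term_le (k : ℕ) (x : ℝ) (n : ℕ) :
    bit (Nat.pair k n) x / 2 ^ (n + 1) ≤ 1 / 2 / 2 ^ n := by
  rw [div_div, ← pow_succ']
  gcongr
  exact bit_le_one _ _

lemma unif_term_nonneg (k : ℕ) (x : ℝ) (n : ℕ) : 0 ≤ bit (Nat.pair k n) x / 2 ^ (n + 1) :=
  div_nonneg (bit_nonneg _ _) (by positivity)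

lemma unif_nonneg (k : ℕ) (x : ℝ) : 0 ≤ unif k x :=
  tsum_nonneg (unif_term_nonneg k x)

lemma unif_le_one (k : ℕ) (x : ℝ) : unif k x ≤ 1 := by
  rw [unif, ← tsum_geometric_two' 1]
  exact Summable.tsum_le_tsum (unif_term_le k x)
    ((summable_geometric_two' 1).of_nonneg_of_le (unif_term_nonneg k x) (unif_term_le k x))
    (summable_geometric_two' 1)

lemma bit_eq_one_of_unif_eq_one {k : ℕ} {x : ℝ} (h : unif k x = 1) (n : ℕ) :
    bit (Nat.pair k n) x = 1 := by
  refine bit_eq_one_of_ne_zero fun h0 => h.not_lt ?_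
  rw [unif, ← tsum_geometric_two' 1]
  refine Summable.tsum_lt_tsum_of_nonneg (unif_term_nonneg k x) (unif_term_le k x) (i := n) ?_
    (summable_geometric_two' 1)
  rw [h0, zero_div]
  positivity

lemma volume_setOf_unif_eq_one (k : ℕ) : volume {x | unif k x = 1} = 0 :=
  measure_mono_null (fun _ hx n => bit_eq_one_of_unif_eq_one hx n)
    (volume_setOf_forall_bit_eq_one (m := Nat.pair k) fun _ _ => Nat.pair_lt_pair_right k)

lemma sample_pos {S : Type} [Fintype S] [Nonempty S] {q : S → ℝ} (hq : ∀ s, 0 ≤ q s)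
    (hsum : ∑ s, q s = 1) {u : ℝ} (hu0 : 0 ≤ u) (hu1 : u < 1) : 0 < q (sample q u) := by
  set e := Fintype.equivFin S
  set I := Finset.univ.filter fun i => u < ∑ j ∈ Finset.Iic i, q (e.symm j)
  set last := (Finset.univ : Finset (Fin (Fintype.card S))).max' Finset.univ_nonempty
  have hlast : last ∈ I := by
    have hIic : Finset.Iic last = Finset.univ :=
      Finset.eq_univ_of_forall fun j => Finset.mem_Iic.2 (Finset.le_max' _ j (Finset.mem_univ j))
    simpa [I, hIic, Equiv.sum_comp e.symm q, hsum] using hu1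
  have hI : I.Nonempty := ⟨last, hlast⟩
  have hsample : sample q u = e.symm (I.min' hI) := dif_pos hI
  rw [hsample]
  refine pos_of_lt_sum_Iic_of_forall_lt (q := q ∘ e.symm) (fun _ => hq _) hu0
    (Finset.mem_filter.1 (I.min'_mem hI)).2 fun j hj => not_lt.1 fun hlt => ?_
  exact hj.not_ge (I.min'_le j (Finset.mem_filter.2 ⟨Finset.mem_univ j, hlt⟩))

variable {V A : Type} [Fintype V] [Fintype A]

/-- `σ` is read at the empty history, which determines it when `σ` is memoryless. -/
def StepUnder (M : MDP V A) (σ : M.Strategy) (v v' : V) : Prop :=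
  ∃ a ∈ M.enabled v, 0 < σ.act [] v a ∧ 0 < M.p v a v'

lemma sum_enabled_act {M : MDP V A} (σ : M.Strategy) (h : List (V × A)) (v : V) :
    ∑ a ∈ M.enabled v, σ.act h v a = 1 := by
  rw [← σ.act_sum h v]
  exact Finset.sum_subset (Finset.subset_univ _) fun a _ ha => σ.act_support h v a ha

section

variable [Nonempty V] [Nonempty A] [DecidableEq V] {M : MDP V A} {σ : M.Strategy}

lemma sample_diracD (v : V) {u : ℝ} (hu0 : 0 ≤ u) (hu1 : u < 1) : sample (diracD v) u = v := by
  have h := sample_pos (q := diracD v) (fun _ => by unfold diracD; split_ifs <;> norm_num)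
    (by simp [diracD]) hu0 hu1
  by_contra hne
  simp [diracD, hne] at h

lemma reflTransGen_stepUnder_run (hσ : σ.Memoryless) (v₀ : V) {x : ℝ}
    (hx : ∀ k, unif k x < 1) (n : ℕ) :
    Relation.ReflTransGen (M.StepUnder σ) v₀ (M.run σ (diracD v₀) x n).2.1 ∧
      0 < σ.act [] (M.run σ (diracD v₀) x n).2.1 (M.run σ (diracD v₀) x n).2.2 := by
  have hpos {S : Type} [Fintype S] [Nonempty S] {q : S → ℝ} (hq : ∀ s, 0 ≤ q s)
      (hsum : ∑ s, q s = 1) (k : ℕ) : 0 < q (sample q (unif k x)) :=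
    sample_pos hq hsum (unif_nonneg k x) (hx k)
  induction n with
  | zero =>
    simp only [run, sample_diracD v₀ (unif_nonneg 0 x) (hx 0)]
    exact ⟨.refl, hpos (σ.act_nonneg [] v₀) (σ.act_sum [] v₀) 1⟩
  | succ n ih =>
    obtain ⟨hreach, hact⟩ := ih
    simp only [run]
    set r := M.run σ (diracD v₀) x n
    have henabled : r.2.2 ∈ M.enabled r.2.1 :=
      not_not.1 fun h => hact.ne' (σ.act_support [] _ _ h)
    rw [hσ (r.2 :: r.1) []]
    exact ⟨hreach.tail
      ⟨r.2.2, henabled, hact, hpos (M.p_nonneg _ _) (M.p_sum _ _ henabled) _⟩,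
      hpos (σ.act_nonneg [] _) (σ.act_sum [] _) _⟩

lemma exists_reflTransGen_stepUnder_of_prReach_pos (hσ : σ.Memoryless) (v₀ : V) {F : Set V}
    (hpos : 0 < M.PrReach σ (diracD v₀) F) :
    ∃ w ∈ F, Relation.ReflTransGen (M.StepUnder σ) v₀ w := by
  by_contra! hunreach
  have hsub : {x | x ∈ Set.Icc (0 : ℝ) 1 ∧
      M.stateAt σ (diracD v₀) x ∈ {w | ∃ n, w n ∈ F}} ⊆ ⋃ k, {x | unif k x = 1} := by
    rintro x ⟨-, n, hn⟩
    by_contra hx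
    simp only [Set.mem_iUnion, Set.mem_ofPred_eq, not_exists] at hx
    exact hunreach _ hn
      (reflTransGen_stepUnder_run hσ v₀ (fun k => (unif_le_one k x).lt_of_ne (hx k)) n).1
  rw [PrReach, PrEvent, measure_mono_null hsub (measure_iUnion_null volume_setOf_unif_eq_one)]
    at hpos
  exact hpos.false

end

variable [DecidableEq V] {M : MDP V A} {F : Finset V}

lemma sum_compl_eq_sum_subtype {β : Type*} [AddCommMonoid β] (f : V → β) :
    ∑ v ∈ Fᶜ, f v = ∑ u : {v // v ∉ F}, f u :=
  Finset.sum_subtype Fᶜ (fun _ => Finset.mem_compl) f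

lemma Pmat_nonneg (σ : M.Strategy) (u v : {v // v ∉ F}) : 0 ≤ M.Pmat σ F u v :=
  Finset.sum_nonneg fun _ _ => mul_nonneg (σ.act_nonneg _ _ _) (M.p_nonneg _ _ _)

lemma Pmat_mulVec_one (σ : M.Strategy) (u : {v // v ∉ F}) :
    (M.Pmat σ F *ᵥ 1) u =
      1 - ∑ a ∈ M.enabled u.1, σ.act [] u.1 a * ∑ v ∈ F, M.p u.1 a v := by
  have hstay (a) (ha : a ∈ M.enabled u.1) :
      ∑ v : {v // v ∉ F}, M.p u.1 a v = 1 - ∑ v ∈ F, M.p u.1 a v := by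
    rw [← sum_compl_eq_sum_subtype, ← M.p_sum u.1 a ha, ← Finset.sum_compl_add_sum F,
      add_sub_cancel_right]
  simp only [Matrix.mulVec, dotProduct, Pi.one_apply, mul_one, Pmat, Matrix.of_apply]
  rw [Finset.sum_comm, ← sum_enabled_act σ [] u.1, ← Finset.sum_sub_distrib]
  refine Finset.sum_congr rfl fun a ha => ?_
  rw [← Finset.mul_sum, hstay a ha, mul_sub, mul_one]

lemma Pmat_mulVec_one_le (σ : M.Strategy) : M.Pmat σ F *ᵥ 1 ≤ 1 := fun u => by
  rw [Pmat_mulVec_one, Pi.one_apply, sub_le_self_iff]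
  exact Finset.sum_nonneg fun a _ =>
    mul_nonneg (σ.act_nonneg _ _ _) (Finset.sum_nonneg fun v _ => M.p_nonneg _ _ _)

lemma Pmat_mulVec_one_lt_of_stepUnder {σ : M.Strategy} {u : {v // v ∉ F}} {w : V} (hw : w ∈ F)
    (hstep : M.StepUnder σ u w) : (M.Pmat σ F *ᵥ 1) u < 1 := by
  obtain ⟨a, ha, hσa, hp⟩ := hstep
  rw [Pmat_mulVec_one, sub_lt_self_iff]
  refine Finset.sum_pos' (fun a _ => mul_nonneg (σ.act_nonneg _ _ _)
    (Finset.sum_nonneg fun v _ => M.p_nonneg _ _ _)) ⟨a, ha, mul_pos hσa ?_⟩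
  exact Finset.sum_pos' (fun v _ => M.p_nonneg _ _ _) ⟨w, hw, hp⟩

lemma Pmat_pos_of_stepUnder {σ : M.Strategy} {u v : {v // v ∉ F}} (hstep : M.StepUnder σ u v) :
    0 < M.Pmat σ F u v := by
  obtain ⟨a, ha, hσa, hp⟩ := hstep
  exact Finset.sum_pos' (fun _ _ => mul_nonneg (σ.act_nonneg _ _ _) (M.p_nonneg _ _ _))
    ⟨a, ha, mul_pos hσa hp⟩

lemma exists_pow_Pmat_mulVec_one_lt_of_reflTransGen {σ : M.Strategy} {u w : V} (hw : w ∈ F)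
    (hreach : Relation.ReflTransGen (M.StepUnder σ) u w) (hu : u ∉ F) :
    ∃ n, (M.Pmat σ F ^ n *ᵥ 1) ⟨u, hu⟩ < 1 := by
  induction hreach using Relation.ReflTransGen.head_induction_on with
  | refl => exact absurd hw hu
  | @head u c hstep _ ih =>
    by_cases hc : c ∈ F
    · exact ⟨1, by simpa using Pmat_mulVec_one_lt_of_stepUnder (u := ⟨u, hu⟩) hc hstep⟩
    · obtain ⟨n, hn⟩ := ih hc
      exact ⟨n + 1, Matrix.pow_succ_mulVec_one_lt (Pmat_nonneg σ) (Pmat_mulVec_one_le σ)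
        (Pmat_pos_of_stepUnder (u := ⟨u, hu⟩) (v := ⟨c, hc⟩) hstep) hn⟩

lemma summable_pow_Pmat_apply {σ : M.Strategy}
    (hreach : ∀ u : V, ∃ w ∈ F, Relation.ReflTransGen (M.StepUnder σ) u w)
    (u v : {v // v ∉ F}) : Summable fun n => (M.Pmat σ F ^ n) u v :=
  Matrix.summable_pow_apply (Pmat_nonneg σ) (Pmat_mulVec_one_le σ) (fun u => by
    obtain ⟨w, hw, hreach⟩ := hreach u
    exact exists_pow_Pmat_mulVec_one_lt_of_reflTransGen hw hreach u.2) u v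

noncomputable def expectedVisits (M : MDP V A) (σ : M.Strategy) (F : Finset V) (α : V → ℝ) :
    {v // v ∉ F} → ℝ :=
  (fun u : {v // v ∉ F} => α u) ᵥ* ∑' n : ℕ, M.Pmat σ F ^ n

lemma yvisit_nonneg (σ : M.Strategy) {α : V → ℝ} (hα : ∀ v, 0 ≤ α v) (v : V) (a : A) :
    0 ≤ M.yvisit σ F α v a := by
  unfold yvisit
  split_ifs
  · exact le_rfl
  · exact Finset.sum_nonneg fun u _ => mul_nonneg (hα u) (tsum_nonneg fun n =>
      mul_nonneg (Matrix.pow_apply_nonneg (Pmat_nonneg σ) n _ _) (σ.act_nonneg _ _ _))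

lemma yvisit_eq_expectedVisits_mul (σ : M.Strategy) (α : V → ℝ)
    (hsum : Summable fun n => M.Pmat σ F ^ n) {v : V} (hv : v ∉ F) (a : A) :
    M.yvisit σ F α v a = M.expectedVisits σ F α ⟨v, hv⟩ * σ.act [] v a := by
  rw [yvisit, dif_neg hv, expectedVisits, Matrix.vecMul, dotProduct, Finset.sum_mul]
  refine Finset.sum_congr rfl fun u _ => ?_
  rw [Matrix.tsum_apply hsum, tsum_mul_right, mul_assoc]

lemma expectedVisits_sub_vecMul_Pmat (σ : M.Strategy) (α : V → ℝ)
    (hsum : Summable fun n => M.Pmat σ F ^ n) :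
    M.expectedVisits σ F α - M.expectedVisits σ F α ᵥ* M.Pmat σ F =
      fun u : {v // v ∉ F} => α u := by
  have h := congrArg ((fun u : {v // v ∉ F} => α u) ᵥ* ·) hsum.tsum_pow_mul_one_sub
  simp only [← Matrix.vecMul_vecMul, Matrix.vecMul_sub, Matrix.vecMul_one] at h
  exact h

lemma lpFeasible_yvisit (σ : M.Strategy) {α : V → ℝ} (hα : ∀ v, 0 ≤ α v)
    (hsum : ∀ u v : {v // v ∉ F}, Summable fun n => (M.Pmat σ F ^ n) u v) :
    M.LPFeasible α F (M.yvisit σ F α) (M.yvisitF σ F α) := by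
  have hsum' : Summable fun n => M.Pmat σ F ^ n :=
    Pi.summable.2 fun u => Pi.summable.2 fun v => hsum u v
  have hout (v : V) (hv : v ∉ F) :
      ∑ a ∈ M.enabled v, M.yvisit σ F α v a = M.expectedVisits σ F α ⟨v, hv⟩ := by
    simp only [yvisit_eq_expectedVisits_mul σ α hsum' hv, ← Finset.mul_sum, sum_enabled_act,
      mul_one]
  have hin (v : V) (hv : v ∉ F) :
      ∑ v' ∈ Fᶜ, ∑ a' ∈ M.enabled v', M.p v' a' v * M.yvisit σ F α v' a' =
        (M.expectedVisits σ F α ᵥ* M.Pmat σ F) ⟨v, hv⟩ := by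
    rw [sum_compl_eq_sum_subtype, Matrix.vecMul, dotProduct]
    refine Finset.sum_congr rfl fun u _ => ?_
    simp only [yvisit_eq_expectedVisits_mul σ α hsum' u.2, Pmat, Matrix.of_apply,
      Finset.mul_sum]
    exact Finset.sum_congr rfl fun a _ => by ring
  refine ⟨fun v hv => ?_, fun v _ => sub_self _, fun v _ => ?_,
    fun v _ a _ => yvisit_nonneg σ hα v a⟩
  · rw [hout v hv, hin v hv]
    exact congr_fun (expectedVisits_sub_vecMul_Pmat σ α hsum') ⟨v, hv⟩
  · exact Finset.sum_nonneg fun v' _ => Finset.sum_nonneg fun a' _ =>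
      mul_nonneg (M.p_nonneg _ _ _) (yvisit_nonneg σ hα _ _)

end MDP

open MDP in
theorem expected_visits_wellDefined_and_lp_feasible_general
    {V A : Type} [Fintype V] [Fintype A] [Nonempty V] [Nonempty A] [DecidableEq V]
    (M : MDP V A) (F : Finset V)
    (α : V → ℝ) (hα : IsDist α)
    (σ : M.Strategy) (hσ : σ.Memoryless)
    (hpos : ∀ v : V, 0 < M.PrReach σ (diracD v) (↑F : Set V)) :
    (∀ v' v : {w : V // w ∉ F}, Summable fun n : ℕ => (M.Pmat σ F ^ n) v' v) ∧
    M.LPFeasible α F (M.yvisit σ F α) (M.yvisitF σ F α) := by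
  have hsum := summable_pow_Pmat_apply fun v =>
    exists_reflTransGen_stepUnder_of_prReach_pos hσ v (hpos v)
  exact ⟨hsum, lpFeasible_yvisit σ hα.1 hsum⟩

open MDP in
/-- For an MDP with absorbing targets, initial distribution `α` on `V ∖ F`, and a
memoryless strategy `σ` reaching `F` with positive probability from every state, the
expected-visits vector `y'` is well defined (all the series are convergent, hence all
entries finite) and is a feasible solution of the multi-objective LP. -/
theorem expected_visits_wellDefined_and_lp_feasible
    {V A : Type} [Fintype V] [Fintype A] [Nonempty V] [Nonempty A] [DecidableEq V]
    (M : MDP V A) {k : ℕ} (Fi : Fin k → Finset V) (F : Finset V)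
    (hF : F = Finset.univ.biUnion Fi)
    (habs : ∀ v ∈ F, M.Absorbing v)
    (α : V → ℝ) (hα : IsDist α) (hsupp : ∀ v ∈ F, α v = 0)
    (σ : M.Strategy) (hσ : σ.Memoryless)
    (hpos : ∀ v : V, 0 < M.PrReach σ (diracD v) (↑F : Set V)) :
    (∀ v' v : {w : V // w ∉ F}, Summable fun n : ℕ => (M.Pmat σ F ^ n) v' v) ∧
    M.LPFeasible α F (M.yvisit σ F α) (M.yvisitF σ F α) :=
  expected_visits_wellDefined_and_lp_feasible_general M F α hα σ hσ hpos
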